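/- The number of partitions λ of weight n whose Young diagram fits inside a k × ℓ rectangle (at most k parts, each part at most ℓ) equals the coefficient of q^n in the Gaussian binomial coefficient [k+ℓ choose k]_q. -/

import Mathlib

/-!
Both sides obey the same recursion. The `q`-Pascal rule
`[k+ℓ+2 choose k+1]_q = [k+ℓ+1 choose k]_q + q^(k+1) [k+ℓ+1 choose k+1]_q`
mirrors the split of the partitions in a `(k+1) × (ℓ+1)` box into those with at most `k` parts
and those with exactly `k+1` parts; deleting the first column (of length `k+1`) of the latter
leaves an arbitrary partition of `n - (k+1)` in a `(k+1) × ℓ` box. If `k = 0` or `ℓ = 0` only the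
empty partition fits, matching `[ℓ choose 0]_q = [k choose k]_q = 1`.
-/

open Polynomial Finset

/-- The Gaussian (q-)binomial coefficient `[n choose k]_q`, as a polynomial in `q`
over `ℚ`. -/
noncomputable def gaussBinom : ℕ → ℕ → Polynomial ℚ
  | _, 0 => 1
  | 0, _ + 1 => 0
  | n + 1, k + 1 => gaussBinom n k + Polynomial.X ^ (k + 1) * gaussBinom n (k + 1)

lemma gaussBinom_zero_right (n : ℕ) : gaussBinom n 0 = 1 := by
  cases n <;> rfl

lemma gaussBinom_succ_succ (n k : ℕ) :
    gaussBinom (n + 1) (k + 1) = gaussBinom n k + X ^ (k + 1) * gaussBinom n (k + 1) := rfl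

lemma gaussBinom_eq_zero_of_lt : ∀ {n k : ℕ}, n < k → gaussBinom n k = 0
  | 0, _ + 1, _ => rfl
  | n + 1, k + 1, h => by
    rw [gaussBinom_succ_succ, gaussBinom_eq_zero_of_lt (by omega),
      gaussBinom_eq_zero_of_lt (by omega), mul_zero, add_zero]

lemma gaussBinom_self : ∀ n : ℕ, gaussBinom n n = 1
  | 0 => rfl
  | n + 1 => by
    rw [gaussBinom_succ_succ, gaussBinom_self n, gaussBinom_eq_zero_of_lt n.lt_succ_self,
      mul_zero, add_zero]

theorem Multiset.filter_ne_add_replicate {α : Type*} [DecidableEq α] (s : Multiset α) (b : α) :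
    s.filter (· ≠ b) + replicate (card s - card (s.filter (· ≠ b))) b = s := by
  conv_rhs => rw [← filter_add_not (· ≠ b) s]
  simp only [ne_eq, not_not]
  congr 1
  rw [eq_comm, eq_replicate]
  refine ⟨?_, fun a ha => (mem_filter.1 ha).2⟩
  conv_rhs => rw [← filter_add_not (· ≠ b) s]
  simp

theorem Multiset.map_add_one_map_sub_one {s : Multiset ℕ} (hs : ∀ a ∈ s, 0 < a) :
    (s.map (· - 1)).map (· + 1) = s := by
  rw [map_map]
  conv_rhs => rw [← map_id s]
  exact map_congr rfl fun a ha => Nat.sub_add_cancel (hs a ha)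

theorem Multiset.sum_map_add_one (s : Multiset ℕ) : (s.map (· + 1)).sum = s.sum + card s := by
  simp [sum_map_add]

abbrev BoxPartition (k ℓ n : ℕ) :=
  {p : n.Partition // p.parts.card ≤ k ∧ ∀ a ∈ p.parts, a ≤ ℓ}

def BoxPartition.equivMultiset (k ℓ n : ℕ) :
    BoxPartition k ℓ n ≃
      {s : Multiset ℕ // Multiset.card s = k ∧ (∀ a ∈ s, a ≤ ℓ) ∧ s.sum = n} where
  toFun p := ⟨p.1.parts + Multiset.replicate (k - p.1.parts.card) 0, by
    obtain ⟨p, hcard, hle⟩ := p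
    refine ⟨by simp; omega, fun a ha => ?_, by simp [p.parts_sum]⟩
    rcases Multiset.mem_add.1 ha with ha | ha
    · exact hle a ha
    · simp [Multiset.eq_of_mem_replicate ha]⟩
  invFun s := ⟨.ofSums n s.1 s.2.2.2, by
    obtain ⟨s, hcard, hle, -⟩ := s
    refine ⟨(Multiset.card_le_card (Multiset.filter_le _ _)).trans_eq hcard, fun a ha => ?_⟩
    exact hle a (Multiset.mem_of_mem_filter ha)⟩
  left_inv p := by
    ext1; ext1
    simp only [Nat.Partition.ofSums_parts, Multiset.filter_add]
    rw [Multiset.filter_eq_self.2 fun a ha => (p.1.parts_pos ha).ne',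
      Multiset.filter_eq_nil.2 fun a ha => by simp [Multiset.eq_of_mem_replicate ha], add_zero]
  right_inv s := Subtype.ext <| by
    conv_rhs => rw [← Multiset.filter_ne_add_replicate s.1 0, s.2.1]
    rfl

/-- The weight condition reads `s.sum + k = n` rather than `s.sum = n - k`, which truncated
subtraction would make satisfiable when `n < k`. -/
def equivRemoveFirstColumn (k ℓ n : ℕ) :
    {p : n.Partition // p.parts.card = k ∧ ∀ a ∈ p.parts, a ≤ ℓ + 1} ≃
      {s : Multiset ℕ // Multiset.card s = k ∧ (∀ a ∈ s, a ≤ ℓ) ∧ s.sum + k = n} where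
  toFun p := ⟨p.1.parts.map (· - 1), by
    obtain ⟨p, hcard, hle⟩ := p
    refine ⟨by simp [hcard], fun a ha => ?_, ?_⟩
    · obtain ⟨b, hb, rfl⟩ := Multiset.mem_map.1 ha
      exact Nat.sub_le_of_le_add (hle b hb)
    · have hsum := Multiset.sum_map_add_one (p.parts.map (· - 1))
      rw [Multiset.map_add_one_map_sub_one fun a => p.parts_pos, p.parts_sum] at hsum
      simp [hsum, hcard]⟩
  invFun s := ⟨⟨s.1.map (· + 1), by simp, by rw [Multiset.sum_map_add_one, s.2.1, s.2.2.2]⟩, by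
    obtain ⟨s, hcard, hle, -⟩ := s
    refine ⟨by simp [hcard], fun a ha => ?_⟩
    obtain ⟨b, hb, rfl⟩ := Multiset.mem_map.1 ha
    simpa using hle b hb⟩
  left_inv p := by
    ext1; ext1
    exact Multiset.map_add_one_map_sub_one fun a => p.1.parts_pos
  right_inv s := by
    ext1
    simp [Multiset.map_map]

lemma card_partition_subtype_of_iff_parts_eq_zero {n : ℕ} (P : n.Partition → Prop)
    (hP : ∀ p, P p ↔ p.parts = 0) : Nat.card {p // P p} = if n = 0 then 1 else 0 := by
  split_ifs with hn
  · subst hn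
    have : Unique {p : Nat.Partition 0 // P p} :=
      { default := ⟨default, (hP _).2 (by simp)⟩
        uniq := fun p => Subtype.ext (Subsingleton.elim _ _) }
    exact Nat.card_unique
  · have : IsEmpty {p // P p} :=
      ⟨fun ⟨p, hp⟩ => hn (by rw [← p.parts_sum, (hP p).1 hp, Multiset.sum_zero])⟩
    exact Nat.card_of_isEmpty

lemma card_boxPartition_zero_left (ℓ n : ℕ) :
    Nat.card (BoxPartition 0 ℓ n) = if n = 0 then 1 else 0 :=
  card_partition_subtype_of_iff_parts_eq_zero _ fun p =>
    ⟨fun h => Multiset.card_eq_zero.1 (Nat.le_zero.1 h.1), fun h => by simp [h]⟩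

lemma card_boxPartition_zero_right (k n : ℕ) :
    Nat.card (BoxPartition k 0 n) = if n = 0 then 1 else 0 :=
  card_partition_subtype_of_iff_parts_eq_zero _ fun p => by
    refine ⟨fun h => Multiset.eq_zero_of_forall_notMem fun a ha => ?_, fun h => by simp [h]⟩
    exact (p.parts_pos ha).ne' (Nat.le_zero.1 (h.2 a ha))

lemma card_partitions_exact_parts (k ℓ n : ℕ) :
    Nat.card {p : n.Partition // p.parts.card = k ∧ ∀ a ∈ p.parts, a ≤ ℓ + 1} =
      if k ≤ n then Nat.card (BoxPartition k ℓ (n - k)) else 0 := by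
  rw [Nat.card_congr (equivRemoveFirstColumn k ℓ n)]
  split_ifs with hkn
  · rw [Nat.card_congr (BoxPartition.equivMultiset k ℓ (n - k))]
    exact Nat.card_congr <|
      Equiv.subtypeEquivRight fun s => and_congr_right' (and_congr_right' (by omega))
  · have : IsEmpty {s : Multiset ℕ // Multiset.card s = k ∧ (∀ a ∈ s, a ≤ ℓ) ∧ s.sum + k = n} :=
      ⟨fun s => hkn (s.2.2.2 ▸ Nat.le_add_left k _)⟩
    exact Nat.card_of_isEmpty

lemma card_boxPartition_succ_succ (k ℓ n : ℕ) :
    Nat.card (BoxPartition (k + 1) (ℓ + 1) n) = Nat.card (BoxPartition k (ℓ + 1) n) +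
      if k + 1 ≤ n then Nat.card (BoxPartition (k + 1) ℓ (n - (k + 1))) else 0 := by
  classical
  rw [← card_partitions_exact_parts, ← Nat.card_sum]
  refine Nat.card_congr ((Equiv.subtypeEquivRight fun p => ?_).trans (subtypeOrEquiv _ _ ?_))
  · rw [← or_and_right, Nat.le_add_one_iff]
  · exact fun P hle heq p hp => absurd (hle p hp).1 (by rw [(heq p hp).1]; omega)

/-- The number of partitions of `n` fitting inside a `k × ℓ` box
(at most `k` parts, each part at most `ℓ`) is the coefficient of `q^n` in
`[k+ℓ choose k]_q`. -/
theorem card_partitions_in_box (k ℓ n : ℕ) :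
    ((Nat.card {p : n.Partition // p.parts.card ≤ k ∧ ∀ a ∈ p.parts, a ≤ ℓ} : ℕ) : ℚ)
      = (gaussBinom (k + ℓ) k).coeff n := by
  induction k generalizing ℓ n with
  | zero =>
    rw [card_boxPartition_zero_left, zero_add, gaussBinom_zero_right, coeff_one, Nat.cast_ite,
      Nat.cast_one, Nat.cast_zero]
  | succ k ihk =>
    induction ℓ generalizing n with
    | zero =>
      rw [card_boxPartition_zero_right, add_zero, gaussBinom_self, coeff_one, Nat.cast_ite,
        Nat.cast_one, Nat.cast_zero]
    | succ ℓ ihl =>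
      rw [card_boxPartition_succ_succ, show k + 1 + (ℓ + 1) = k + (ℓ + 1) + 1 by omega,
        gaussBinom_succ_succ, coeff_add, coeff_X_pow_mul', Nat.cast_add, ihk,
        show k + (ℓ + 1) = k + 1 + ℓ by omega]
      split_ifs
      · rw [ihl]
      · rw [Nat.cast_zero]
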